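/- arXiv:1809.10925 — 6 statements merged into one kernel-verified Lean document; each statement's English description precedes it below -/
import Mathlib

section
/- The halfspace depth is upper semi-continuous in its first argument: for any probability measure P on ℝ^d and any x₀ ∈ ℝ^d, limsup_{x → x₀} HD(x;P) ≤ HD(x₀;P). In particular each level set { y : HD(y;P) ≥ δ } is closed. -/
/-!
If `HD P x₀ < c`, some halfspace `{⟪z, u⟫ ≤ α}` containing `x₀` has mass `< c`. Since `P` is
finite, its mass is continuous from above in `α`, so the slightly larger halfspace
`{⟪z, u⟫ ≤ β}`, `β > α`, still has mass `< c`. That halfspace contains the open set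
`{⟪z, u⟫ < β}`, a neighbourhood of `x₀`, at every point of which the depth is therefore `< c`.
-/

open MeasureTheory Filter Topology Set
open scoped ENNReal RealInnerProductSpace

/-- The closed halfspace `{z : ⟪z, u⟫ ≤ α}` in `ℝ^d`. -/
def hsp (d : ℕ) (u : EuclideanSpace ℝ (Fin d)) (α : ℝ) :
    Set (EuclideanSpace ℝ (Fin d)) := {z | ⟪z, u⟫ ≤ α}

/-- The halfspace depth of `x` with respect to `P`. -/
noncomputable def HD {d : ℕ} (P : Measure (EuclideanSpace ℝ (Fin d)))
    (x : EuclideanSpace ℝ (Fin d)) : ℝ≥0∞ :=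
  ⨅ (u : EuclideanSpace ℝ (Fin d)) (_ : u ≠ 0) (α : ℝ) (_ : x ∈ hsp d u α),
    P (hsp d u α)

variable {d : ℕ}

lemma hsp_mono (u : EuclideanSpace ℝ (Fin d)) {α β : ℝ} (h : α ≤ β) :
    hsp d u α ⊆ hsp d u β :=
  fun _ hz => le_trans hz h

lemma isClosed_hsp (u : EuclideanSpace ℝ (Fin d)) (α : ℝ) : IsClosed (hsp d u α) :=
  isClosed_le (continuous_id.inner continuous_const) continuous_const

lemma biInter_hsp_gt (u : EuclideanSpace ℝ (Fin d)) (α : ℝ) :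
    ⋂ β > α, hsp d u β = hsp d u α := by
  ext z
  simp only [hsp, mem_iInter, mem_ofPred_eq]
  exact ⟨le_of_forall_gt_imp_ge_of_dense, fun hz β hβ => hz.trans hβ.le⟩

lemma tendsto_measure_hsp_nhdsGT (P : Measure (EuclideanSpace ℝ (Fin d))) [IsFiniteMeasure P]
    (u : EuclideanSpace ℝ (Fin d)) (α : ℝ) :
    Tendsto (fun β => P (hsp d u β)) (𝓝[>] α) (𝓝 (P (hsp d u α))) := by
  rw [← biInter_hsp_gt u α]
  exact tendsto_measure_biInter_gt (fun β _ => (isClosed_hsp u β).measurableSet.nullMeasurableSet)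
    (fun _ _ _ hij => hsp_mono u hij) ⟨α + 1, by linarith, measure_ne_top P _⟩

namespace HD

lemma le_measure_hsp (P : Measure (EuclideanSpace ℝ (Fin d))) {x u : EuclideanSpace ℝ (Fin d)}
    {α : ℝ} (hu : u ≠ 0) (hx : x ∈ hsp d u α) : HD P x ≤ P (hsp d u α) :=
  iInf₂_le_of_le u hu (iInf₂_le α hx)

lemma exists_hsp_measure_lt (P : Measure (EuclideanSpace ℝ (Fin d)))
    {x : EuclideanSpace ℝ (Fin d)} {c : ℝ≥0∞} (h : HD P x < c) :
    ∃ u ≠ 0, ∃ α, x ∈ hsp d u α ∧ P (hsp d u α) < c := by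
  simpa only [HD, iInf_lt_iff, exists_prop] using h

theorem upperSemicontinuous (P : Measure (EuclideanSpace ℝ (Fin d))) [IsFiniteMeasure P] :
    UpperSemicontinuous (HD P) := by
  intro x₀ c hc
  obtain ⟨u, hu, α, hx₀, hαc⟩ := exists_hsp_measure_lt P hc
  obtain ⟨β, hβc, hαβ⟩ :=
    (((tendsto_measure_hsp_nhdsGT P u α).eventually_lt_const hαc).and self_mem_nhdsWithin).exists
  have hopen : IsOpen {z : EuclideanSpace ℝ (Fin d) | ⟪z, u⟫ < β} :=
    isOpen_lt (continuous_id.inner continuous_const) continuous_const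
  filter_upwards [hopen.mem_nhds (lt_of_le_of_lt hx₀ hαβ)] with x hx
  exact (le_measure_hsp P hu (le_of_lt hx : x ∈ hsp d u β)).trans_lt hβc

end HD

/-- The halfspace depth is upper semi-continuous in its first argument; in particular
each upper level set is closed. -/
theorem halfspace_depth_upperSemicontinuous {d : ℕ}
    (P : Measure (EuclideanSpace ℝ (Fin d))) [IsProbabilityMeasure P] :
    UpperSemicontinuous (fun x => HD P x) ∧
    ∀ δ : ℝ≥0∞, IsClosed {y : EuclideanSpace ℝ (Fin d) | δ ≤ HD P y} :=
  ⟨HD.upperSemicontinuous P, (HD.upperSemicontinuous P).isClosed_preimage⟩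
end

section
/- For any Borel probability measure P on ℝ^d, sup_{x∈ℝ^d} HD(x;P) ≥ 1/(d+1). -/
open MeasureTheory
open scoped ENNReal RealInnerProductSpace

/-!
Fix `ε > 0` and a closed ball `B` of mass at least `1 - ε`. For every open halfspace `A` with
`P A + ε < 1/(d+1)`, the set `B \ A` is compact and convex, and any `d + 1` of these sets meet:
otherwise `d + 1` such halfspaces together with `Bᶜ` would cover the space with total mass `< 1`.
By Helly's theorem all of them share a point `x`. A closed halfspace `H ∋ x` is the decreasing
limit of open halfspaces `A ⊇ H`; these contain `x`, so `P A + ε ≥ 1/(d+1)`, and passing to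
the limit gives `P H + ε ≥ 1/(d+1)`.
-/

open Metric Filter Set Module
open scoped Topology

lemma exists_measure_compl_closedBall_le {X : Type*} [PseudoMetricSpace X] [CompleteSpace X]
    [SecondCountableTopology X] [MeasurableSpace X] [BorelSpace X]
    (μ : Measure X) [IsFiniteMeasure μ] (x : X) {ε : ℝ≥0∞} (hε : 0 < ε) :
    ∃ R : ℝ, μ (closedBall x R)ᶜ ≤ ε := by
  obtain ⟨K, hK, hKμ⟩ :=
    isTightMeasureSet_iff_exists_isCompact_measure_compl_le.1
      (isTightMeasureSet_singleton (μ := μ)) ε hε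
  obtain ⟨R, hKR⟩ := hK.isBounded.subset_closedBall x
  exact ⟨R, (measure_mono (compl_subset_compl.2 hKR)).trans (hKμ μ rfl)⟩

lemma tendsto_measure_setOf_lt_nhdsGT {X : Type*} [MeasurableSpace X] (μ : Measure X)
    [IsFiniteMeasure μ] {f : X → ℝ} (hf : Measurable f) (a : ℝ) :
    Tendsto (fun b => μ {x | f x < b}) (𝓝[>] a) (𝓝 (μ {x | f x ≤ a})) := by
  have hinter : ⋂ b > a, {x | f x < b} = {x | f x ≤ a} := by
    ext x
    simp only [mem_iInter]
    exact ⟨fun h => le_of_forall_gt h, fun h b hb => h.trans_lt hb⟩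
  rw [← hinter]
  exact tendsto_measure_biInter_gt
    (fun b _ => (measurableSet_lt hf measurable_const).nullMeasurableSet)
    (fun b c _ hbc x hx => lt_of_lt_of_le hx hbc) ⟨a + 1, by linarith, measure_ne_top μ _⟩

lemma not_subset_biUnion_of_measure_add_lt {X ι : Type*} [MeasurableSpace X] (μ : Measure X)
    [IsProbabilityMeasure μ] {K : Set X} {A : ι → Set X} {I : Finset ι} (hI : I.Nonempty)
    {δ c : ℝ≥0∞} (hK : μ Kᶜ ≤ δ) (hA : ∀ i ∈ I, μ (A i) + δ < c) (hc : I.card * c ≤ 1) :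
    ¬ K ⊆ ⋃ i ∈ I, A i := by
  intro hcover
  have hδ : δ ≤ ∑ _i ∈ I, δ := by
    obtain ⟨i₀, hi₀⟩ := hI
    exact Finset.single_le_sum (f := fun _ => δ) (fun _ _ => bot_le) hi₀
  have : (1 : ℝ≥0∞) < 1 := calc
    (1 : ℝ≥0∞) = μ (Kᶜ ∪ K) := by rw [compl_union_self, measure_univ]
    _ ≤ μ Kᶜ + ∑ i ∈ I, μ (A i) :=
      (measure_mono (union_subset_union_right _ hcover)).trans <|
        (measure_union_le _ _).trans (add_le_add_right (measure_biUnion_finset_le I A) _)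
    _ ≤ ∑ i ∈ I, (μ (A i) + δ) := by
      rw [Finset.sum_add_distrib, add_comm (∑ i ∈ I, μ (A i))]
      exact add_le_add_left (hK.trans hδ) _
    _ < ∑ _i ∈ I, c := ENNReal.sum_lt_sum_of_nonempty hI hA
    _ = I.card * c := by rw [Finset.sum_const, nsmul_eq_mul]
    _ ≤ 1 := hc
  exact lt_irrefl _ this

lemma exists_forall_le_inner_of_measure_add_lt {E : Type*} [NormedAddCommGroup E]
    [InnerProductSpace ℝ E] [FiniteDimensional ℝ E] [MeasurableSpace E]
    (μ : Measure E) [IsProbabilityMeasure μ]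
    {K : Set E} (hKc : IsCompact K) (hKconv : Convex ℝ K) {δ c : ℝ≥0∞} (hK : μ Kᶜ ≤ δ)
    (hc : ((finrank ℝ E : ℝ≥0∞) + 1) * c ≤ 1) :
    ∃ x : E, ∀ u β, μ {z | ⟪z, u⟫ < β} + δ < c → β ≤ ⟪x, u⟫ := by
  let S := {p : E × ℝ // μ {z | ⟪z, p.1⟫ < p.2} + δ < c}
  let F : S → Set E := fun p => K ∩ {z | p.1.2 ≤ ⟪z, p.1.1⟫}
  have hF_convex (p : S) : Convex ℝ (F p) :=
    hKconv.inter (convex_halfSpace_ge (innerₛₗ ℝ |>.flip p.1.1).isLinear p.1.2)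
  have hF_compact (p : S) : IsCompact (F p) :=
    hKc.inter_right (isClosed_le continuous_const (continuous_id.inner continuous_const))
  have hF_inter (I : Finset S) (hI : I.card ≤ finrank ℝ E + 1) : (⋂ p ∈ I, F p).Nonempty := by
    rcases I.eq_empty_or_nonempty with rfl | hI_ne
    · simp
    by_contra hempty
    refine not_subset_biUnion_of_measure_add_lt μ hI_ne hK (fun p _ => p.2) ?_ fun z hz => ?_
    · calc (I.card : ℝ≥0∞) * c ≤ (finrank ℝ E + 1) * c := by gcongr; exact_mod_cast hI
        _ ≤ 1 := hc
    · have : z ∉ ⋂ p ∈ I, F p := fun h => hempty ⟨z, h⟩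
      simp only [mem_iInter, not_forall] at this
      obtain ⟨p, hp, hzp⟩ := this
      exact mem_biUnion hp (show ⟪z, p.1.1⟫ < p.1.2 from not_le.1 fun h => hzp ⟨hz, h⟩)
  obtain ⟨x, hx⟩ := Convex.helly_theorem_compact' hF_convex hF_compact hF_inter
  exact ⟨x, fun u β h => (mem_iInter.1 hx ⟨(u, β), h⟩).2⟩

lemma le_HD_add_of_forall_le_inner {d : ℕ} (P : Measure (EuclideanSpace ℝ (Fin d)))
    [IsFiniteMeasure P] {x : EuclideanSpace ℝ (Fin d)} {δ c : ℝ≥0∞}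
    (hx : ∀ u β, P {z | ⟪z, u⟫ < β} + δ < c → β ≤ ⟪x, u⟫) : c ≤ HD P x + δ := by
  simp only [HD, ENNReal.iInf_add]
  refine le_iInf₂ fun u _ => le_iInf₂ fun α hxα => ?_
  by_contra! h
  have hlim :=
    (tendsto_measure_setOf_lt_nhdsGT P (f := fun z => ⟪z, u⟫) (by fun_prop) α).add_const δ
  obtain ⟨β, hβ, hαβ⟩ := ((hlim.eventually_lt_const h).and self_mem_nhdsWithin).exists
  have : ⟪x, u⟫ ≤ α := hxα
  linarith [hx u β hβ, hαβ]

/-- For any Borel probability measure `P` on `ℝ^d`, the maximal halfspace depth is at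
least `1/(d+1)`. -/
theorem halfspace_depth_max_ge {d : ℕ}
    (P : Measure (EuclideanSpace ℝ (Fin d))) [IsProbabilityMeasure P] :
    ((d : ℝ≥0∞) + 1)⁻¹ ≤ ⨆ x : EuclideanSpace ℝ (Fin d), HD P x := by
  refine ENNReal.le_of_forall_pos_le_add fun ε hε _ => ?_
  obtain ⟨R, hR⟩ := exists_measure_compl_closedBall_le P 0 (ENNReal.coe_pos.2 hε)
  have hc : ((finrank ℝ (EuclideanSpace ℝ (Fin d)) : ℝ≥0∞) + 1) * ((d : ℝ≥0∞) + 1)⁻¹ ≤ 1 := by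
    rw [finrank_euclideanSpace_fin, ENNReal.mul_inv_cancel (by positivity) (by simp)]
  obtain ⟨x, hx⟩ := exists_forall_le_inner_of_measure_add_lt P (isCompact_closedBall 0 R)
    (convex_closedBall 0 R) hR hc
  calc ((d : ℝ≥0∞) + 1)⁻¹ ≤ HD P x + ε := le_HD_add_of_forall_le_inner P hx
    _ ≤ (⨆ x, HD P x) + ε := by gcongr; exact le_iSup (HD P) x
end

section
/- The halfspace depth vanishes at infinity: for any Borel probability measure P on ℝ^d, lim_{M→∞} sup { HD(x;P) : ‖x‖ > M } = 0. Consequently, for every δ > 0 the level set { y : HD(y;P) ≥ δ } is bounded. -/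
open MeasureTheory
open scoped ENNReal RealInnerProductSpace

/-!
A point `x ≠ 0` lies in the halfspace `{z : ⟪z, x⟫ ≥ ‖x‖²}`, which by Cauchy–Schwarz is
contained in `{z : ‖z‖ ≥ ‖x‖}`. Hence the depth of every point outside the ball of radius `M`
is at most the tail mass `P {z : ‖z‖ > M}`, which tends to `0` by continuity of `P` from above.
-/

open Filter Topology

lemma tendsto_measure_norm_gt_atTop {E : Type*} [SeminormedAddCommGroup E] [MeasurableSpace E]
    [OpensMeasurableSpace E] (μ : Measure E) [IsFiniteMeasure μ] :
    Tendsto (fun r : ℝ => μ {x | r < ‖x‖}) atTop (𝓝 0) := by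
  have hempty : (⋂ r : ℝ, {x : E | r < ‖x‖}) = ∅ :=
    Set.iInter_eq_empty_iff.2 fun x => ⟨‖x‖, lt_irrefl ‖x‖⟩
  simpa [hempty, Function.comp_def] using
    tendsto_measure_iInter_atTop (μ := μ) (s := fun r : ℝ => {x : E | r < ‖x‖})
    (fun r => (isOpen_lt continuous_const continuous_norm).measurableSet.nullMeasurableSet)
    (fun _ _ hrs _ hx => hrs.trans_lt hx) ⟨0, measure_ne_top μ _⟩

section HalfspaceDepth

variable {d : ℕ}

lemma mem_hsp_neg_self (x : EuclideanSpace ℝ (Fin d)) : x ∈ hsp d (-x) (-‖x‖ ^ 2) := by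
  simp [hsp, inner_neg_right]

lemma hsp_neg_self_subset {x : EuclideanSpace ℝ (Fin d)} (hx : x ≠ 0) :
    hsp d (-x) (-‖x‖ ^ 2) ⊆ {z | ‖x‖ ≤ ‖z‖} := by
  intro z hz
  simp only [hsp, Set.mem_ofPred_eq, inner_neg_right, neg_le_neg_iff] at hz
  have hcs : ⟪z, x⟫ ≤ ‖z‖ * ‖x‖ := real_inner_le_norm z x
  exact le_of_mul_le_mul_right (by nlinarith) (norm_pos_iff.2 hx)

lemma HD_le_measure_hsp (P : Measure (EuclideanSpace ℝ (Fin d)))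
    {x u : EuclideanSpace ℝ (Fin d)} {α : ℝ} (hu : u ≠ 0) (hx : x ∈ hsp d u α) :
    HD P x ≤ P (hsp d u α) :=
  iInf₂_le_of_le u hu (iInf₂_le α hx)

lemma HD_le_measure_norm_ge (P : Measure (EuclideanSpace ℝ (Fin d)))
    {x : EuclideanSpace ℝ (Fin d)} (hx : x ≠ 0) :
    HD P x ≤ P {z | ‖x‖ ≤ ‖z‖} :=
  (HD_le_measure_hsp P (neg_ne_zero.2 hx) (mem_hsp_neg_self x)).trans
    (measure_mono (hsp_neg_self_subset hx))

lemma iSup_HD_norm_gt_le (P : Measure (EuclideanSpace ℝ (Fin d))) {M : ℝ} (hM : 0 ≤ M) :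
    (⨆ (x : EuclideanSpace ℝ (Fin d)) (_ : M < ‖x‖), HD P x) ≤ P {z | M < ‖z‖} := by
  refine iSup₂_le fun x hx => ?_
  have hx0 : x ≠ 0 := norm_pos_iff.1 (hM.trans_lt hx)
  exact (HD_le_measure_norm_ge P hx0).trans (measure_mono fun z hz => hx.trans_le hz)

end HalfspaceDepth

lemma isBounded_setOf_le_of_tendsto_iSup_norm_gt {E : Type*} [SeminormedAddCommGroup E]
    {f : E → ℝ≥0∞} (hf : Tendsto (fun M : ℝ => ⨆ (x : E) (_ : M < ‖x‖), f x) atTop (𝓝 0))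
    {δ : ℝ≥0∞} (hδ : 0 < δ) :
    Bornology.IsBounded {y | δ ≤ f y} := by
  obtain ⟨M, hM⟩ := (hf.eventually_lt_const hδ).exists
  refine (Metric.isBounded_closedBall (x := (0 : E)) (r := M)).subset fun y hy => ?_
  rw [Metric.mem_closedBall, dist_zero_right]
  by_contra! hyM
  exact (lt_of_le_of_lt (le_iSup₂_of_le y hyM le_rfl) hM).not_ge hy

open Filter in
/-- The halfspace depth vanishes at infinity; consequently every positive level set
is bounded. -/
theorem halfspace_depth_vanishes_at_infinity {d : ℕ}
    (P : Measure (EuclideanSpace ℝ (Fin d))) [IsProbabilityMeasure P] :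
    Tendsto (fun M : ℝ => ⨆ (x : EuclideanSpace ℝ (Fin d)) (_ : M < ‖x‖), HD P x)
      atTop (nhds 0) ∧
    ∀ δ : ℝ≥0∞, 0 < δ →
      Bornology.IsBounded {y : EuclideanSpace ℝ (Fin d) | δ ≤ HD P y} := by
  have hlim : Tendsto (fun M : ℝ => ⨆ (x : EuclideanSpace ℝ (Fin d)) (_ : M < ‖x‖), HD P x)
      atTop (𝓝 0) :=
    tendsto_of_tendsto_of_tendsto_of_le_of_le' tendsto_const_nhds
      (tendsto_measure_norm_gt_atTop P) (Eventually.of_forall fun _ => zero_le)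
      ((eventually_ge_atTop 0).mono fun _ hM => iSup_HD_norm_gt_le P hM)
  exact ⟨hlim, fun _ hδ => isBounded_setOf_le_of_tendsto_iSup_norm_gt hlim hδ⟩
end

section
/- If P is the uniform probability distribution on the closed unit ball in ℝ^d, then for every x ∈ ℝ^d one has HD(x;P) = F₁(−‖x‖), where F₁ is the cumulative distribution function of the first coordinate of a uniform random point on the unit ball, i.e. F₁(s) = (Γ((d+2)/2)/(Γ((d+1)/2)√π)) ∫_{−1}^{s} (1−t²)^{(d−1)/2} dt for s ∈ [−1,1], F₁(s)=0 for s ≤ −1 and F₁(s)=1 for s ≥ 1. -/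
/-!
The uniform distribution on the ball is rotation invariant, so the mass of a halfspace
`⟪z, u⟫ ≤ s` with `‖u‖ = 1` depends only on `s`: it is the mass `F₁ s` of the cap `z₀ ≤ s`.
Slicing the cap along the first coordinate (Fubini), its volume is the volume of the unit
`(d-1)`-ball times `∫_{-1}^s (1 - t²)^{(d-1)/2} dt`; the case `s = 1`, where the cap is the whole
ball, evaluates the normalising constant. A halfspace containing `x` has `s ≥ ⟪x, u⟫ ≥ -‖x‖`, with
equality for `u = -x/‖x‖`, so by monotonicity of `F₁` the infimum is `F₁ (-‖x‖)`.
-/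

open MeasureTheory
open scoped ENNReal RealInnerProductSpace

open Real Set ProbabilityTheory

theorem volume_setOf_sum_sq_le (n : ℕ) {R : ℝ} (hR : 0 ≤ R) :
    volume {y : Fin n → ℝ | ∑ i, y i ^ 2 ≤ R} =
      ENNReal.ofReal (√π ^ n / Gamma (n / 2 + 1) * R ^ ((n : ℝ) / 2)) := by
  rcases n.eq_zero_or_pos with rfl | hn
  · simp [hR, volume_pi, Real.Gamma_one]
  have : Nonempty (Fin n) := ⟨⟨0, hn⟩⟩
  have hset : {y : Fin n → ℝ | ∑ i, y i ^ 2 ≤ R} =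
      WithLp.toLp 2 ⁻¹' Metric.closedBall (0 : EuclideanSpace ℝ (Fin n)) √R := by
    ext y
    rw [mem_preimage, mem_closedBall_zero_iff, Real.le_sqrt (norm_nonneg _) hR,
      EuclideanSpace.real_norm_sq_eq]
    rfl
  rw [hset, (PiLp.volume_preserving_toLp (Fin n)).measure_preimage
      measurableSet_closedBall.nullMeasurableSet, EuclideanSpace.volume_closedBall,
    Fintype.card_fin, ← ENNReal.ofReal_pow (sqrt_nonneg R), ← ENNReal.ofReal_mul (by positivity),
    sqrt_eq_rpow, ← rpow_natCast, ← rpow_mul hR, mul_comm]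
  ring_nf

theorem volume_setOf_sq_add_sum_sq_le (n : ℕ) {s : ℝ} (hs : s ≤ 1) (t : ℝ) :
    volume {y : Fin n → ℝ | t ^ 2 + ∑ i, y i ^ 2 ≤ 1 ∧ t ≤ s} =
      (Icc (-1) s).indicator
        (fun t ↦ ENNReal.ofReal (√π ^ n / Gamma (n / 2 + 1) * (1 - t ^ 2) ^ ((n : ℝ) / 2))) t := by
  by_cases ht : t ∈ Icc (-1) s
  · have hset : {y : Fin n → ℝ | t ^ 2 + ∑ i, y i ^ 2 ≤ 1 ∧ t ≤ s} =
        {y | ∑ i, y i ^ 2 ≤ 1 - t ^ 2} := by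
      ext y
      simp only [mem_ofPred_eq, ht.2, and_true]
      constructor <;> intro h <;> linarith
    rw [indicator_of_mem ht, hset, volume_setOf_sum_sq_le n (by nlinarith [ht.1, ht.2])]
  · have hset : {y : Fin n → ℝ | t ^ 2 + ∑ i, y i ^ 2 ≤ 1 ∧ t ≤ s} = ∅ := by
      refine eq_empty_of_forall_notMem fun y ⟨hy, hts⟩ ↦ ht ⟨?_, hts⟩
      nlinarith [Finset.sum_nonneg fun i (_ : i ∈ Finset.univ) ↦ sq_nonneg (y i)]
    rw [indicator_of_notMem ht, hset, measure_empty]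

theorem volume_closedBall_inter_coord_le (n : ℕ) {s : ℝ} (hs : -1 ≤ s) (hs1 : s ≤ 1) :
    volume (Metric.closedBall (0 : EuclideanSpace ℝ (Fin (n + 1))) 1 ∩ {z | z 0 ≤ s}) =
      ENNReal.ofReal (√π ^ n / Gamma (n / 2 + 1) *
        ∫ t in (-1)..s, (1 - t ^ 2) ^ ((n : ℝ) / 2)) := by
  set e := (MeasurableEquiv.toLp 2 (Fin (n + 1) → ℝ)).symm.trans
    (MeasurableEquiv.piFinSuccAbove (fun _ ↦ ℝ) 0)
  have he : MeasurePreserving e volume (volume.prod volume) :=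
    (EuclideanSpace.volume_preserving_symm_measurableEquiv_toLp _).trans
      (volume_preserving_piFinSuccAbove _ 0)
  set A := {p : ℝ × (Fin n → ℝ) | p.1 ^ 2 + ∑ i, p.2 i ^ 2 ≤ 1 ∧ p.1 ≤ s}
  have hA : MeasurableSet A := by measurability
  have hset : Metric.closedBall 0 1 ∩ {z | z 0 ≤ s} = e ⁻¹' A := by
    ext z
    simp [e, A, ← sq_le_one_iff₀ (norm_nonneg z), EuclideanSpace.real_norm_sq_eq, Fin.sum_univ_succ,
      Fin.tail]
  set f := fun t : ℝ ↦ √π ^ n / Gamma (n / 2 + 1) * (1 - t ^ 2) ^ ((n : ℝ) / 2)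
  have hf : ContinuousOn f (Icc (-1) s) := by fun_prop (disch := positivity)
  have hf0 : ∀ᵐ t ∂volume.restrict (Icc (-1) s), 0 ≤ f t := by
    filter_upwards [ae_restrict_mem measurableSet_Icc] with t ht
    have := Gamma_pos_of_pos (show (0 : ℝ) < n / 2 + 1 by positivity)
    have : 0 ≤ 1 - t ^ 2 := by nlinarith [ht.1, ht.2]
    positivity
  have hslice (t : ℝ) :
      volume (Prod.mk t ⁻¹' A) = (Icc (-1) s).indicator (fun t ↦ ENNReal.ofReal (f t)) t :=
    volume_setOf_sq_add_sum_sq_le n hs1 t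
  rw [hset, he.measure_preimage hA.nullMeasurableSet, Measure.prod_apply hA,
    lintegral_congr hslice, lintegral_indicator measurableSet_Icc,
    ← ofReal_integral_eq_lintegral_ofReal hf.integrableOn_Icc hf0,
    integral_Icc_eq_integral_Ioc, ← intervalIntegral.integral_of_le hs,
    intervalIntegral.integral_const_mul]

theorem volume_closedBall_inter_hsp {d : ℕ} {u : EuclideanSpace ℝ (Fin d)} (hu : ‖u‖ = 1)
    (i : Fin d) (r s : ℝ) :
    volume (Metric.closedBall 0 r ∩ hsp d u s) =
      volume (Metric.closedBall 0 r ∩ {z : EuclideanSpace ℝ (Fin d) | z i ≤ s}) := by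
  set ρ := (ℝ ∙ (u - EuclideanSpace.single i 1))ᗮ.reflection
  have hρu : ρ u = EuclideanSpace.single i 1 := Submodule.reflection_sub (by simp [hu])
  have hset :
      Metric.closedBall 0 r ∩ hsp d u s = ρ ⁻¹' (Metric.closedBall 0 r ∩ {z | z i ≤ s}) := by
    ext z
    have : (ρ z) i = ⟪z, u⟫ := by
      rw [← ρ.inner_map_map, hρu, EuclideanSpace.inner_single_right]
      simp
    simp [hsp, this]
  have hmeas : MeasurableSet (Metric.closedBall 0 r ∩ {z : EuclideanSpace ℝ (Fin d) | z i ≤ s}) :=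
    measurableSet_closedBall.inter (measurableSet_le (by fun_prop) measurable_const)
  rw [hset, ρ.measurePreserving.measure_preimage hmeas.nullMeasurableSet]

theorem closedBall_inter_coord_le_of_one_le {d : ℕ} (i : Fin d) {s : ℝ} (hs : 1 ≤ s) :
    Metric.closedBall (0 : EuclideanSpace ℝ (Fin d)) 1 ∩ {z | z i ≤ s} = Metric.closedBall 0 1 :=
  inter_eq_left.mpr fun z hz ↦ by
    have := PiLp.norm_apply_le z i
    rw [Real.norm_eq_abs] at this
    rw [mem_closedBall_zero_iff] at hz
    exact (le_abs_self _).trans (this.trans (hz.trans hs))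

theorem integral_one_sub_sq_rpow (n : ℕ) :
    ∫ t in (-1 : ℝ)..1, (1 - t ^ 2) ^ ((n : ℝ) / 2) =
      √π * Gamma ((n + 2) / 2) / Gamma ((n + 3) / 2) := by
  have hvol := volume_closedBall_inter_coord_le n (s := 1) (by norm_num) le_rfl
  rw [closedBall_inter_coord_le_of_one_le 0 le_rfl, EuclideanSpace.volume_closedBall] at hvol
  have hI : 0 ≤ ∫ t in (-1 : ℝ)..1, (1 - t ^ 2) ^ ((n : ℝ) / 2) :=
    intervalIntegral.integral_nonneg (by norm_num) fun t ht ↦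
      rpow_nonneg (by nlinarith [ht.1, ht.2]) _
  have hΓ₁ := Gamma_pos_of_pos (show (0 : ℝ) < n / 2 + 1 by positivity)
  have hΓ₂ := Gamma_pos_of_pos (show (0 : ℝ) < (n + 3) / 2 by positivity)
  simp only [ENNReal.ofReal_one, one_pow, one_mul, Fintype.card_fin] at hvol
  rw [ENNReal.ofReal_eq_ofReal_iff (by positivity) (by positivity)] at hvol
  rw [eq_div_iff hΓ₂.ne']
  have : ((n + 1 : ℕ) : ℝ) / 2 + 1 = (n + 3) / 2 := by push_cast; ring
  rw [this] at hvol
  field_simp at hvol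
  refine mul_left_cancel₀ (pow_ne_zero n (sqrt_pos.mpr pi_pos).ne') ?_
  rw [pow_succ] at hvol
  linear_combination -hvol

noncomputable def ballCoordCDF (d : ℕ) (s : ℝ) : ℝ :=
  if s ≤ -1 then 0 else if 1 ≤ s then 1 else
    (Real.Gamma (((d : ℝ) + 2) / 2) / (Real.Gamma (((d : ℝ) + 1) / 2) * Real.sqrt Real.pi)) *
      ∫ t in (-1 : ℝ)..s, (1 - t ^ 2) ^ (((d : ℝ) - 1) / 2)

theorem ballCoordCDF_succ_eq_div (n : ℕ) {s : ℝ} (hs : -1 < s) (hs1 : s < 1) :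
    ballCoordCDF (n + 1) s = (∫ t in (-1)..s, (1 - t ^ 2) ^ ((n : ℝ) / 2)) /
      ∫ t in (-1 : ℝ)..1, (1 - t ^ 2) ^ ((n : ℝ) / 2) := by
  have hΓ₁ := Gamma_pos_of_pos (show (0 : ℝ) < (n + 2) / 2 by positivity)
  have hΓ₂ := Gamma_pos_of_pos (show (0 : ℝ) < (n + 3) / 2 by positivity)
  have hπ := sqrt_pos.mpr pi_pos
  rw [ballCoordCDF, if_neg hs.not_ge, if_neg hs1.not_ge, integral_one_sub_sq_rpow]
  push_cast
  ring_nf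
  field_simp

theorem cond_closedBall_hsp (n : ℕ) {u : EuclideanSpace ℝ (Fin (n + 1))} (hu : ‖u‖ = 1) (s : ℝ) :
    volume[|Metric.closedBall 0 1] (hsp (n + 1) u s) = ENNReal.ofReal (ballCoordCDF (n + 1) s) := by
  set B := Metric.closedBall (0 : EuclideanSpace ℝ (Fin (n + 1))) 1
  set c := √π ^ n / Gamma (n / 2 + 1) with hc_def
  have hc : 0 < c := by
    have := Gamma_pos_of_pos (show (0 : ℝ) < n / 2 + 1 by positivity)
    positivity
  have hI : 0 < ∫ t in (-1 : ℝ)..1, (1 - t ^ 2) ^ ((n : ℝ) / 2) := by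
    have := Gamma_pos_of_pos (show (0 : ℝ) < (n + 2) / 2 by positivity)
    have := Gamma_pos_of_pos (show (0 : ℝ) < (n + 3) / 2 by positivity)
    rw [integral_one_sub_sq_rpow]
    positivity
  have hB : volume B = ENNReal.ofReal (c * ∫ t in (-1 : ℝ)..1, (1 - t ^ 2) ^ ((n : ℝ) / 2)) := by
    rw [← volume_closedBall_inter_coord_le n (by norm_num) le_rfl,
      closedBall_inter_coord_le_of_one_le 0 le_rfl]
  rw [cond_apply measurableSet_closedBall, volume_closedBall_inter_hsp hu 0]
  rcases le_or_gt s (-1) with hs | hs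
  · have hnull : volume (B ∩ {z | z 0 ≤ s}) = 0 := by
      refine le_antisymm ?_ zero_le
      calc volume (B ∩ {z | z 0 ≤ s}) ≤ volume (B ∩ {z | z 0 ≤ -1}) :=
            measure_mono (inter_subset_inter_right _ fun z (hz : z 0 ≤ s) ↦ hz.trans hs)
        _ = 0 := by rw [volume_closedBall_inter_coord_le n le_rfl (by norm_num)]; simp
    rw [hnull, mul_zero, ballCoordCDF, if_pos hs, ENNReal.ofReal_zero]
  rcases le_or_gt 1 s with hs1 | hs1
  · rw [closedBall_inter_coord_le_of_one_le 0 hs1, hB,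
      ENNReal.inv_mul_cancel (by simp; positivity) ENNReal.ofReal_ne_top, ballCoordCDF,
      if_neg hs.not_ge, if_pos hs1, ENNReal.ofReal_one]
  · rw [volume_closedBall_inter_coord_le n hs.le hs1.le, ← hc_def, hB,
      ballCoordCDF_succ_eq_div n hs hs1,
      ← ENNReal.ofReal_inv_of_pos (by positivity), ← ENNReal.ofReal_mul (by positivity)]
    congr 1
    field_simp

theorem monotone_ofReal_ballCoordCDF (n : ℕ) :
    Monotone fun s ↦ ENNReal.ofReal (ballCoordCDF (n + 1) s) := by
  intro s t hst
  have he : ‖EuclideanSpace.single (0 : Fin (n + 1)) (1 : ℝ)‖ = 1 := by simp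
  simp only [← cond_closedBall_hsp n he]
  exact measure_mono fun z (hz : _ ≤ s) ↦ hz.trans hst

theorem hsp_smul {d : ℕ} {c : ℝ} (hc : 0 < c) (u : EuclideanSpace ℝ (Fin d)) (α : ℝ) :
    hsp d (c • u) (c * α) = hsp d u α := by
  ext z
  simp [hsp, real_inner_smul_right, mul_le_mul_iff_right₀ hc]

theorem exists_norm_eq_one_inner_eq_neg_norm {E : Type*} [NormedAddCommGroup E]
    [InnerProductSpace ℝ E] [Nontrivial E] (x : E) : ∃ u : E, ‖u‖ = 1 ∧ ⟪x, u⟫ = -‖x‖ := by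
  by_cases hx : x = 0
  · obtain ⟨u, hu⟩ := exists_norm_eq E zero_le_one
    exact ⟨u, hu, by simp [hx]⟩
  · refine ⟨-(‖x‖⁻¹ • x), by simp [norm_smul, hx], ?_⟩
    have : ‖x‖ ≠ 0 := norm_ne_zero_iff.mpr hx
    rw [inner_neg_right, real_inner_smul_right, real_inner_self_eq_norm_sq]
    field_simp

theorem HD_eq_of_forall_norm_eq_one {d : ℕ} (hd : 0 < d) (P : Measure (EuclideanSpace ℝ (Fin d)))
    {G : ℝ → ℝ≥0∞} (hG : Monotone G) (hPG : ∀ u, ‖u‖ = 1 → ∀ s, P (hsp d u s) = G s)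
    (x : EuclideanSpace ℝ (Fin d)) : HD P x = G (-‖x‖) := by
  have : Nonempty (Fin d) := ⟨⟨0, hd⟩⟩
  apply le_antisymm
  · obtain ⟨u, hu, hxu⟩ := exists_norm_eq_one_inner_eq_neg_norm x
    calc HD P x ≤ P (hsp d u (-‖x‖)) :=
          iInf₂_le_of_le u (norm_ne_zero_iff.mp (hu ▸ one_ne_zero)) (iInf₂_le _ hxu.le)
      _ = G (-‖x‖) := hPG u hu _
  · refine le_iInf₂ fun u hu ↦ le_iInf₂ fun α (hxα : ⟪x, u⟫ ≤ α) ↦ ?_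
    have hu' : 0 < ‖u‖⁻¹ := inv_pos.mpr (norm_pos_iff.mpr hu)
    have hw : ‖‖u‖⁻¹ • u‖ = 1 := by simp [norm_smul, hu]
    rw [← hsp_smul hu', hPG _ hw]
    apply hG
    have := neg_le_of_abs_le (abs_real_inner_le_norm x (‖u‖⁻¹ • u))
    rw [hw, mul_one, real_inner_smul_right] at this
    exact this.trans (mul_le_mul_of_nonneg_left hxα hu'.le)

/-- For the uniform distribution on the unit ball in `ℝ^d`, the halfspace depth is
`F₁(-‖x‖)`, with `F₁` the c.d.f. of the first coordinate. -/
theorem halfspace_depth_unit_ball {d : ℕ} (hd : 0 < d)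
    (P : Measure (EuclideanSpace ℝ (Fin d)))
    (hP : P = (volume (Metric.closedBall (0 : EuclideanSpace ℝ (Fin d)) 1))⁻¹ •
      volume.restrict (Metric.closedBall (0 : EuclideanSpace ℝ (Fin d)) 1))
    (F1 : ℝ → ℝ)
    (hF1 : ∀ s : ℝ, F1 s =
      if s ≤ -1 then 0 else if 1 ≤ s then 1 else
        (Real.Gamma (((d : ℝ) + 2) / 2) /
          (Real.Gamma (((d : ℝ) + 1) / 2) * Real.sqrt Real.pi)) *
          ∫ t in (-1 : ℝ)..s, (1 - t ^ 2) ^ (((d : ℝ) - 1) / 2)) :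
    ∀ x : EuclideanSpace ℝ (Fin d), HD P x = ENNReal.ofReal (F1 (-‖x‖)) := by
  obtain ⟨n, rfl⟩ := Nat.exists_eq_add_one_of_ne_zero hd.ne'
  obtain rfl : F1 = ballCoordCDF (n + 1) := funext hF1
  subst hP
  exact HD_eq_of_forall_norm_eq_one hd _ (monotone_ofReal_ballCoordCDF n)
    fun u hu s ↦ cond_closedBall_hsp n hu s
end

section
/- If a Borel probability measure P on ℝ^d is angularly symmetric around x_P (i.e. (X − x_P)/‖X − x_P‖ and −(X − x_P)/‖X − x_P‖ have the same distribution, for X ∼ P with X ≠ x_P a.s. outside {x_P}), then its halfspace depth at x_P satisfies HD(x_P;P) ≥ (1 + P({x_P}))/2. -/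
open MeasureTheory
open scoped ENNReal RealInnerProductSpace

/-
The direction map `z ↦ (z - x)/‖z - x‖` sends `z` into the halfspace `{⟪v, u⟫ ≤ 0}` only if
`z` lies in the halfspace `{⟪z, u⟫ ≤ ⟪x, u⟫}`, and by antipodal symmetry the image of `P` off
`{x}` puts at least half of its mass `1 - P {x}` there. Adding back the atom `P {x}`, which every
halfspace containing `x` carries, gives `P {x} + (1 - P {x})/2 = (1 + P {x})/2`.
-/

section

variable {E : Type*} [NormedAddCommGroup E] [InnerProductSpace ℝ E]

theorem inner_le_of_inner_smul_sub_nonpos {x z u : E} (h : ⟪‖z - x‖⁻¹ • (z - x), u⟫ ≤ 0) :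
    ⟪z, u⟫ ≤ ⟪x, u⟫ := by
  rcases eq_or_ne z x with rfl | hzx
  · exact le_rfl
  have hpos : 0 < ‖z - x‖⁻¹ := inv_pos.mpr (norm_pos_iff.mpr (sub_ne_zero.mpr hzx))
  rw [real_inner_smul_left, inner_sub_left] at h
  linarith [nonpos_of_mul_nonpos_right h hpos]

variable [MeasurableSpace E] [BorelSpace E]

theorem measure_univ_le_two_mul_measure_inner_nonpos {μ : Measure E}
    (hμ : μ.map Neg.neg = μ) (u : E) :
    μ Set.univ ≤ 2 * μ {v | ⟪v, u⟫ ≤ 0} := by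
  have h_reflect : μ {v | 0 ≤ ⟪v, u⟫} ≤ μ {v | ⟪v, u⟫ ≤ 0} := by
    calc μ {v | 0 ≤ ⟪v, u⟫} = μ (Neg.neg ⁻¹' {v | ⟪v, u⟫ ≤ 0}) := by
          simp only [Set.preimage_ofPred_eq, inner_neg_left, neg_nonpos]
      _ ≤ μ.map Neg.neg {v | ⟪v, u⟫ ≤ 0} :=
          Measure.le_map_apply continuous_neg.measurable.aemeasurable _
      _ = μ {v | ⟪v, u⟫ ≤ 0} := by rw [hμ]
  calc μ Set.univ = μ ({v | ⟪v, u⟫ ≤ 0} ∪ {v | 0 ≤ ⟪v, u⟫}) := by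
        congr 1; ext v; simp [le_total]
    _ ≤ μ {v | ⟪v, u⟫ ≤ 0} + μ {v | 0 ≤ ⟪v, u⟫} := measure_union_le _ _
    _ ≤ 2 * μ {v | ⟪v, u⟫ ≤ 0} := by rw [two_mul]; gcongr

theorem measure_univ_add_measure_singleton_le_two_mul_measure_halfspace
    [SecondCountableTopology E] (P : Measure E) (x u : E)
    (hsym : Measure.map (fun v => -v)
        (Measure.map (fun z => ‖z - x‖⁻¹ • (z - x)) (P.restrict {x}ᶜ)) =
      Measure.map (fun z => ‖z - x‖⁻¹ • (z - x)) (P.restrict {x}ᶜ)) :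
    P Set.univ + P {x} ≤ 2 * P {z | ⟪z, u⟫ ≤ ⟪x, u⟫} := by
  set H := {z | ⟪z, u⟫ ≤ ⟪x, u⟫}
  set μ := Measure.map (fun z => ‖z - x‖⁻¹ • (z - x)) (P.restrict {x}ᶜ)
  have hdir : Measurable fun z : E => ‖z - x‖⁻¹ • (z - x) := by fun_prop
  have hμ_univ : μ Set.univ = P {x}ᶜ := by
    rw [Measure.map_apply hdir MeasurableSet.univ, Set.preimage_univ,
      Measure.restrict_apply_univ]
  have hμ_le : μ {v | ⟪v, u⟫ ≤ 0} ≤ P (H \ {x}) := by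
    rw [Measure.map_apply hdir (measurableSet_le (by fun_prop) measurable_const),
      Measure.restrict_apply' (measurableSet_singleton x).compl]
    exact measure_mono fun z ⟨hz, hzx⟩ => ⟨inner_le_of_inner_smul_sub_nonpos hz, hzx⟩
  have h_atom : P {x} + P (H \ {x}) = P H := by
    rw [← measure_inter_add_sdiff H (measurableSet_singleton x),
      Set.inter_eq_right.mpr (by simp [H])]
  calc P Set.univ + P {x} = P {x}ᶜ + 2 * P {x} := by
        rw [← measure_add_measure_compl (measurableSet_singleton x), two_mul]; ring
    _ ≤ 2 * μ {v | ⟪v, u⟫ ≤ 0} + 2 * P {x} := by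
        rw [← hμ_univ]; gcongr; exact measure_univ_le_two_mul_measure_inner_nonpos hsym u
    _ ≤ 2 * P H := by rw [← h_atom, mul_add, add_comm]; gcongr

end

/-- If `P` is angularly symmetric around `x_P`, then
`HD(x_P;P) ≥ (1 + P({x_P}))/2`. -/
theorem halfspace_depth_angularly_symmetric {d : ℕ}
    (P : Measure (EuclideanSpace ℝ (Fin d))) [IsProbabilityMeasure P]
    (xP : EuclideanSpace ℝ (Fin d))
    (hsym : Measure.map (fun v => -v)
        (Measure.map (fun z : EuclideanSpace ℝ (Fin d) => ‖z - xP‖⁻¹ • (z - xP))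
          (P.restrict {xP}ᶜ)) =
      Measure.map (fun z : EuclideanSpace ℝ (Fin d) => ‖z - xP‖⁻¹ • (z - xP))
        (P.restrict {xP}ᶜ)) :
    (1 + P {xP}) / 2 ≤ HD P xP := by
  refine le_iInf₂ fun u _ => le_iInf₂ fun α hxP => ENNReal.div_le_of_le_mul ?_
  calc 1 + P {xP} = P Set.univ + P {xP} := by rw [measure_univ]
    _ ≤ 2 * P {z | ⟪z, u⟫ ≤ ⟪xP, u⟫} :=
        measure_univ_add_measure_singleton_le_two_mul_measure_halfspace P xP u hsym
    _ ≤ P (hsp d u α) * 2 := by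
        rw [mul_comm]
        gcongr
        exact fun z (hz : ⟪z, u⟫ ≤ ⟪xP, u⟫) => hz.trans hxP
end

section
/- Let K be a convex body in ℝ^d containing the closed unit ball B. Define the rolling function r : ∂K → ℝ by r(x) = sup{ ‖x − z‖ : z ∈ K, B(z,‖x−z‖) ⊆ K }. Then for every t ∈ [0,1], the set { x ∈ ∂K : r(x) ≥ t } is closed and its (d−1)-dimensional Hausdorff measure satisfies (1−t)^{d−1} · vol_{d−1}(∂K) ≤ vol_{d−1}({ x ∈ ∂K : r(x) ≥ t }). -/
open MeasureTheory
open scoped ENNReal RealInnerProductSpace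

open Metric Set Topology
open scoped Pointwise

/-!
Let `K ⊖ t = {z | B(z, t) ⊆ K}` be the inner parallel body. A boundary point `x` of `K` has
rolling radius at least `t` exactly when it lies within distance `t` of `K ⊖ t`, which makes the
set closed. Since `B ⊆ K` and `K` is convex, `(1 - t) • K ⊆ K ⊖ t`. The nearest-point map onto a
closed convex set is `1`-Lipschitz, so it does not increase Hausdorff measure. Projecting onto
`(1 - t) • K` maps `∂(K ⊖ t)` onto `∂((1 - t) • K)` (move from a boundary point along an outer
normal until `K ⊖ t` is left), and projecting onto `K ⊖ t` maps the boundary points of rolling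
radius at least `t` onto `∂(K ⊖ t)` (a point of `∂(K ⊖ t)` is at distance `t` from `∂K`). Hence
`(1 - t)^(d-1) μH(∂K) = μH(∂((1 - t) • K)) ≤ μH(∂(K ⊖ t)) ≤ μH({r ≥ t})`. For `t = 1` the bound is
trivial unless `d = 1`, where every boundary point of the segment `K` has rolling radius `1`.
-/

section InnerParallelBody

variable {E : Type*} [NormedAddCommGroup E] {K : Set E} {t s : ℝ} {x : E}

def innerParallelBody (K : Set E) (t : ℝ) : Set E := {z | closedBall z t ⊆ K}

def rollingRadii (K : Set E) (x : E) : Set ℝ :=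
  {s | ∃ z ∈ K, s = ‖x - z‖ ∧ closedBall z ‖x - z‖ ⊆ K}

lemma innerParallelBody_subset (ht : 0 ≤ t) : innerParallelBody K t ⊆ K :=
  fun _ hz ↦ hz (mem_closedBall_self ht)

lemma le_dist_of_mem_frontier {z : E} (hx : x ∈ frontier K) (hz : z ∈ innerParallelBody K t) :
    t ≤ dist x z :=
  not_lt.1 fun hlt ↦
    hx.2 (interior_maximal (ball_subset_closedBall.trans hz) isOpen_ball (mem_ball.2 hlt))

lemma zero_mem_rollingRadii (hx : x ∈ K) : 0 ∈ rollingRadii K x :=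
  ⟨x, hx, by simp, by simpa⟩

lemma mem_rollingRadii_iff_exists_dist_le (hx : x ∈ frontier K) (ht : 0 ≤ t) :
    t ∈ rollingRadii K x ↔ ∃ z ∈ innerParallelBody K t, dist x z ≤ t := by
  constructor
  · rintro ⟨z, -, rfl, hball⟩
    exact ⟨z, hball, (dist_eq_norm x z).le⟩
  · rintro ⟨z, hz, hxz⟩
    have hxz : ‖x - z‖ = t := dist_eq_norm x z ▸ le_antisymm hxz (le_dist_of_mem_frontier hx hz)
    exact ⟨z, innerParallelBody_subset ht hz, hxz.symm, hxz ▸ hz⟩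

variable [NormedSpace ℝ E]

lemma closedBall_subset_iff_forall_add_smul_mem {z : E} {r : ℝ} (hr : 0 ≤ r) :
    closedBall z r ⊆ K ↔ ∀ v ∈ closedBall (0 : E) 1, z + r • v ∈ K := by
  simp only [← affinity_unitClosedBall hr, vadd_set_subset_iff, ← image_smul, forall_mem_image,
    vadd_eq_add]

lemma isClosed_setOf_closedBall_subset {ρ : E → ℝ} (hρ : Continuous ρ) (hρ₀ : ∀ z, 0 ≤ ρ z)
    (hK : IsClosed K) : IsClosed {z | closedBall z (ρ z) ⊆ K} := by
  simp_rw [closedBall_subset_iff_forall_add_smul_mem (hρ₀ _), ofPred_forall]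
  exact isClosed_biInter fun v _ ↦ hK.preimage (continuous_id.add (hρ.smul continuous_const))

lemma IsCompact.innerParallelBody (hK : IsCompact K) (ht : 0 ≤ t) :
    IsCompact (innerParallelBody K t) :=
  hK.of_isClosed_subset (isClosed_setOf_closedBall_subset continuous_const (fun _ ↦ ht) hK.isClosed)
    (innerParallelBody_subset ht)

lemma Convex.innerParallelBody (hK : Convex ℝ K) (ht : 0 ≤ t) :
    Convex ℝ (innerParallelBody K t) := by
  simp_rw [_root_.innerParallelBody, closedBall_subset_iff_forall_add_smul_mem ht, ofPred_forall]
  exact convex_iInter₂ fun v _ ↦ hK.translate_preimage_left (t • v)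

lemma smul_subset_innerParallelBody (hK : Convex ℝ K) (hB : closedBall (0 : E) 1 ⊆ K)
    (ht₀ : 0 ≤ t) (ht₁ : t ≤ 1) : (1 - t) • K ⊆ innerParallelBody K t := by
  rintro _ ⟨k, hk, rfl⟩
  rw [innerParallelBody, mem_ofPred_eq, closedBall_subset_iff_forall_add_smul_mem ht₀]
  exact fun v hv ↦ hK hk (hB hv) (by linarith) ht₀ (by ring)

lemma infDist_compl_le_of_mem_frontier_innerParallelBody (hK : IsClosed K) (ht : 0 ≤ t) {k : E}
    (hk : k ∈ frontier (innerParallelBody K t)) : infDist k Kᶜ ≤ t := by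
  by_contra! hlt
  have hsub : {z | t < infDist z Kᶜ} ⊆ innerParallelBody K t := fun z hz ↦ by
    have hzK : z ∈ K := by
      by_contra hzK
      rw [mem_ofPred_eq, infDist_zero_of_mem hzK] at hz
      linarith
    exact (closedBall_subset_closedBall hz.le).trans
      ((closedBall_infDist_compl_subset_closure hzK).trans hK.closure_subset)
  exact hk.2 (interior_maximal hsub (isOpen_lt continuous_const (continuous_infDist_pt _)) hlt)

lemma isCompact_rollingRadii (hK : IsCompact K) (x : E) : IsCompact (rollingRadii K x) := by
  have : rollingRadii K x = (fun z ↦ ‖x - z‖) '' (K ∩ {z | closedBall z ‖x - z‖ ⊆ K}) := by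
    ext s
    simp only [rollingRadii, mem_image, mem_inter_iff, mem_ofPred_eq, eq_comm (a := s), and_assoc,
      and_comm (a := ‖x - _‖ = s)]
  rw [this]
  exact (hK.inter_right (isClosed_setOf_closedBall_subset (by fun_prop) (fun _ ↦ norm_nonneg _)
    hK.isClosed)).image (by fun_prop)

lemma mem_rollingRadii_of_le (hs : s ∈ rollingRadii K x) (ht₀ : 0 ≤ t) (hts : t ≤ s) :
    t ∈ rollingRadii K x := by
  obtain ⟨z, -, rfl, hball⟩ := hs
  have hcancel : t / ‖x - z‖ * ‖x - z‖ = t :=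
    div_mul_cancel_of_imp fun h ↦ le_antisymm (h ▸ hts) ht₀
  set z' := AffineMap.lineMap x z (t / ‖x - z‖)
  have hxz' : ‖x - z'‖ = t := by
    rw [← dist_eq_norm, dist_comm, dist_lineMap_left, Real.norm_of_nonneg (by positivity),
      dist_eq_norm, hcancel]
  have hsub : closedBall z' t ⊆ closedBall z ‖x - z‖ := by
    refine closedBall_subset_closedBall' ?_
    rw [dist_lineMap_right, dist_eq_norm,
      Real.norm_of_nonneg (sub_nonneg.2 (div_le_one_of_le₀ hts (norm_nonneg _))), sub_mul, hcancel]
    linarith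
  exact ⟨z', hsub.trans hball (mem_closedBall_self ht₀), hxz'.symm, hxz' ▸ hsub.trans hball⟩

lemma le_sSup_rollingRadii_iff (hK : IsCompact K) (hx : x ∈ K) (ht : 0 ≤ t) :
    t ≤ sSup (rollingRadii K x) ↔ t ∈ rollingRadii K x :=
  ⟨fun h ↦ mem_rollingRadii_of_le
      ((isCompact_rollingRadii hK x).sSup_mem ⟨0, zero_mem_rollingRadii hx⟩) ht h,
    fun h ↦ le_csSup (isCompact_rollingRadii hK x).bddAbove h⟩

lemma setOf_le_sSup_rollingRadii_eq (hK : IsCompact K) (ht : 0 ≤ t) :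
    {x | x ∈ frontier K ∧ t ≤ sSup (rollingRadii K x)} =
      frontier K ∩ cthickening t (innerParallelBody K t) := by
  ext x
  refine and_congr_right fun hx ↦ ?_
  rw [le_sSup_rollingRadii_iff hK (hK.isClosed.frontier_subset hx) ht,
    mem_rollingRadii_iff_exists_dist_le hx ht,
    (hK.innerParallelBody ht).cthickening_eq_biUnion_closedBall ht]
  simp only [mem_iUnion₂, mem_closedBall, dist_comm x, exists_prop]

lemma smul_mem_segment_smul {a b c : ℝ} (h : c ∈ Icc a b) (v : E) :
    c • v ∈ segment ℝ (a • v) (b • v) := by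
  rw [← segment_eq_Icc (h.1.trans h.2)] at h
  have := mem_image_of_mem (LinearMap.toSpanSingleton ℝ E v).toAffineMap h
  rwa [image_segment] at this

lemma closedBall_smul_subset_segment (hE : Module.finrank ℝ E = 1) {v : E} (hv : ‖v‖ = 1)
    (a s : ℝ) : closedBall (a • v) s ⊆ segment ℝ ((a - s) • v) ((a + s) • v) := by
  intro w hw
  obtain ⟨c, rfl⟩ :=
    (finrank_eq_one_iff_of_nonzero' v (norm_ne_zero_iff.1 (hv ▸ one_ne_zero))).1 hE w
  rw [mem_closedBall, dist_eq_norm, ← sub_smul, norm_smul, hv, mul_one, Real.norm_eq_abs,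
    abs_le] at hw
  exact smul_mem_segment_smul ⟨by linarith, by linarith⟩ v

lemma frontier_subset_cthickening_innerParallelBody_of_finrank_eq_one
    (hE : Module.finrank ℝ E = 1) (hK : IsClosed K) (hKconv : Convex ℝ K)
    (hB : closedBall (0 : E) 1 ⊆ K) (ht₀ : 0 ≤ t) (ht₁ : t ≤ 1) :
    frontier K ⊆ cthickening t (innerParallelBody K t) := by
  intro x hx
  have hx₁ : 1 ≤ ‖x‖ := not_lt.1 fun h ↦
    hx.2 (interior_mono hB (ball_subset_interior_closedBall (mem_ball_zero_iff.2 h)))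
  set v := ‖x‖⁻¹ • x
  have hv : ‖v‖ = 1 := norm_smul_inv_norm (norm_pos_iff.1 (by linarith))
  have hxv : ‖x‖ • v = x := by rw [smul_smul, mul_inv_cancel₀ (by linarith), one_smul]
  have hxK : ‖x‖ • v ∈ K := hxv.symm ▸ hK.frontier_subset hx
  have hend : (‖x‖ - t - t) • v ∈ K :=
    hKconv.segment_subset (hB (by simp [hv])) hxK
      (smul_mem_segment_smul (a := -1) ⟨by linarith, by linarith⟩ v)
  have hball : closedBall ((‖x‖ - t) • v) t ⊆ K :=
    (closedBall_smul_subset_segment hE hv _ _).trans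
      (hKconv.segment_subset hend (by rwa [sub_add_cancel]))
  refine mem_cthickening_of_dist_le x _ t _ hball ?_
  have : x - (‖x‖ - t) • v = t • v := by rw [sub_smul, hxv]; abel
  rw [dist_eq_norm, this, norm_smul, hv, mul_one, Real.norm_of_nonneg ht₀]

lemma IsCompact.exists_add_smul_mem_frontier (hK : IsCompact K) {z u : E} (hz : z ∈ K)
    (hu : u ≠ 0) : ∃ s : ℝ, 0 ≤ s ∧ z + s • u ∈ frontier K := by
  set f : ℝ → E := fun s ↦ z + s • u
  have hf : IsClosedEmbedding f :=
    (Homeomorph.addLeft z).isClosedEmbedding.comp (isClosedEmbedding_smul_left hu)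
  have hA : IsCompact (f ⁻¹' K) := hf.isCompact_preimage hK
  have h0 : (0 : ℝ) ∈ f ⁻¹' K := by simpa [f] using hz
  refine ⟨sSup (f ⁻¹' K), le_csSup hA.bddAbove h0,
    hf.continuous.frontier_preimage_subset K ⟨subset_closure (hA.sSup_mem ⟨0, h0⟩), fun hint ↦ ?_⟩⟩
  have hnear : ∀ᶠ s in 𝓝[>] sSup (f ⁻¹' K), s ∈ f ⁻¹' K :=
    nhdsWithin_le_nhds (mem_interior_iff_mem_nhds.1 hint)
  obtain ⟨s, hs, hlt⟩ := (hnear.and self_mem_nhdsWithin).exists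
  exact (le_csSup hA.bddAbove hs).not_gt hlt

lemma hausdorffMeasure_frontier_smul [MeasurableSpace E] [BorelSpace E] {e : ℝ} (he : 0 ≤ e)
    {c : ℝ} (hc : 0 < c) (K : Set E) :
    μH[e] (frontier (c • K)) = ENNReal.ofReal (c ^ e) * μH[e] (frontier K) := by
  have : frontier (c • K) = c • frontier K :=
    ((Homeomorph.smulOfNeZero c hc.ne').image_frontier K).symm
  rw [this, Measure.hausdorffMeasure_smul₀ he hc.ne', ENNReal.smul_def, smul_eq_mul,
    ← ENNReal.ofReal_coe_nnreal, NNReal.coe_rpow, coe_nnnorm, Real.norm_of_nonneg hc.le]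

end InnerParallelBody

section NearestPoint

variable {E : Type*} [NormedAddCommGroup E] [InnerProductSpace ℝ E] {C : Set E}

lemma norm_sub_le_of_real_inner_le_zero {x₁ x₂ p₁ p₂ : E} (h₁ : ⟪x₁ - p₁, p₂ - p₁⟫ ≤ 0)
    (h₂ : ⟪x₂ - p₂, p₁ - p₂⟫ ≤ 0) : ‖p₁ - p₂‖ ≤ ‖x₁ - x₂‖ := by
  have hsq : ‖p₁ - p₂‖ ^ 2 ≤ ‖x₁ - x₂‖ * ‖p₁ - p₂‖ := calc
    ‖p₁ - p₂‖ ^ 2 = ⟪p₁ - p₂, p₁ - p₂⟫ := (real_inner_self_eq_norm_sq _).symm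
    _ ≤ ⟪x₁ - x₂, p₁ - p₂⟫ := by
      have : ⟪x₁ - x₂, p₁ - p₂⟫ =
          ⟪p₁ - p₂, p₁ - p₂⟫ - ⟪x₁ - p₁, p₂ - p₁⟫ - ⟪x₂ - p₂, p₁ - p₂⟫ := by
        simp only [inner_sub_left, inner_sub_right, real_inner_comm]
        ring
      linarith
    _ ≤ ‖x₁ - x₂‖ * ‖p₁ - p₂‖ := real_inner_le_norm _ _
  nlinarith [norm_nonneg (p₁ - p₂), norm_nonneg (x₁ - x₂)]

lemma forall_real_inner_le_zero_iff_forall_norm_le (hC : Convex ℝ C) {x p : E} (hp : p ∈ C) :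
    (∀ q ∈ C, ⟪x - p, q - p⟫ ≤ 0) ↔ ∀ q ∈ C, ‖x - p‖ ≤ ‖x - q‖ := by
  have : Nonempty C := ⟨⟨p, hp⟩⟩
  have hbdd : BddBelow (range fun q : C ↦ ‖x - q‖) := ⟨0, forall_mem_range.2 fun _ ↦ norm_nonneg _⟩
  rw [← norm_eq_iInf_iff_real_inner_le_zero hC hp]
  exact ⟨fun h q hq ↦ h ▸ ciInf_le hbdd ⟨q, hq⟩,
    fun h ↦ le_antisymm (le_ciInf fun q ↦ h q q.2) (ciInf_le hbdd ⟨p, hp⟩)⟩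

variable [CompleteSpace E]

lemma exists_ne_zero_forall_real_inner_le_zero_of_mem_frontier (hC : Convex ℝ C)
    (hint : (interior C).Nonempty) {z : E} (hz : z ∈ frontier C) :
    ∃ u ≠ 0, ∀ c ∈ C, ⟪u, c - z⟫ ≤ 0 := by
  obtain ⟨f, hf⟩ := geometric_hahn_banach_open_point hC.interior isOpen_interior hz.2
  have hle : C ⊆ {y | f y ≤ f z} := by
    refine subset_closure.trans ?_
    rw [← hC.closure_interior_eq_closure_of_nonempty_interior hint]
    exact closure_minimal (fun a ha ↦ (hf a ha).le) (isClosed_le f.continuous continuous_const)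
  obtain ⟨a, ha⟩ := hint
  refine ⟨(InnerProductSpace.toDual ℝ E).symm f, fun h0 ↦ ?_, fun c hc ↦ ?_⟩
  · rw [LinearIsometryEquiv.map_eq_zero_iff] at h0
    simpa [h0] using hf a ha
  · rw [InnerProductSpace.toDual_symm_apply, map_sub, sub_nonpos]
    exact hle hc

/-- The nearest-point map onto `C`; the inequality characterizes `p` as the point of `C`
nearest to `x`. -/
lemma exists_lipschitzWith_one_eq_of_real_inner_le_zero (hne : C.Nonempty) (hcl : IsClosed C)
    (hC : Convex ℝ C) :
    ∃ P : E → E, LipschitzWith 1 P ∧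
      ∀ x, ∀ p ∈ C, (∀ q ∈ C, ⟪x - p, q - p⟫ ≤ 0) → P x = p := by
  choose P hPC hPmin using exists_norm_eq_iInf_of_complete_convex hne hcl.isComplete hC
  have hvar x : ∀ q ∈ C, ⟪x - P x, q - P x⟫ ≤ 0 :=
    (norm_eq_iInf_iff_real_inner_le_zero hC (hPC x)).1 (hPmin x)
  refine ⟨P, LipschitzWith.of_dist_le_mul fun x y ↦ ?_, fun x p hp hxp ↦ ?_⟩
  · simpa [dist_eq_norm] using
      norm_sub_le_of_real_inner_le_zero (hvar x _ (hPC y)) (hvar y _ (hPC x))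
  · simpa [sub_eq_zero] using norm_sub_le_of_real_inner_le_zero (hvar x p hp) (hxp _ (hPC x))

variable [MeasurableSpace E] [BorelSpace E] {e : ℝ}

lemma hausdorffMeasure_le_of_forall_exists_real_inner_le_zero {s t : Set E} (hne : C.Nonempty)
    (hcl : IsClosed C) (hC : Convex ℝ C) (he : 0 ≤ e) (hs : s ⊆ C)
    (h : ∀ p ∈ s, ∃ x ∈ t, ∀ q ∈ C, ⟪x - p, q - p⟫ ≤ 0) : μH[e] s ≤ μH[e] t := by
  obtain ⟨P, hP, hPeq⟩ := exists_lipschitzWith_one_eq_of_real_inner_le_zero hne hcl hC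
  calc μH[e] s ≤ μH[e] (P '' t) := measure_mono fun p hp ↦
        let ⟨x, hx, hxp⟩ := h p hp; ⟨x, hx, hPeq x p (hs hp) hxp⟩
    _ ≤ μH[e] t := by simpa using hP.hausdorffMeasure_image_le he t

lemma hausdorffMeasure_frontier_le_of_subset {D : Set E} (hC : Convex ℝ C) (hCcl : IsClosed C)
    (hCint : (interior C).Nonempty) (hD : IsCompact D) (hCD : C ⊆ D) (he : 0 ≤ e) :
    μH[e] (frontier C) ≤ μH[e] (frontier D) := by
  refine hausdorffMeasure_le_of_forall_exists_real_inner_le_zero (hCint.mono interior_subset) hCcl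
    hC he hCcl.frontier_subset fun p hp ↦ ?_
  obtain ⟨u, hu, hnormal⟩ := exists_ne_zero_forall_real_inner_le_zero_of_mem_frontier hC hCint hp
  obtain ⟨s, hs, hexit⟩ := hD.exists_add_smul_mem_frontier (hCD (hCcl.frontier_subset hp)) hu
  refine ⟨p + s • u, hexit, fun q hq ↦ ?_⟩
  rw [add_sub_cancel_left, real_inner_smul_left]
  exact mul_nonpos_of_nonneg_of_nonpos hs (hnormal q hq)

variable {K : Set E} {t : ℝ}

lemma hausdorffMeasure_frontier_innerParallelBody_le [Nontrivial E] (hK : IsCompact K)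
    (hKconv : Convex ℝ K) (ht : 0 ≤ t) (hne : (innerParallelBody K t).Nonempty) (he : 0 ≤ e) :
    μH[e] (frontier (innerParallelBody K t)) ≤
      μH[e] (frontier K ∩ cthickening t (innerParallelBody K t)) := by
  have hTcl : IsClosed (innerParallelBody K t) := (hK.innerParallelBody ht).isClosed
  refine hausdorffMeasure_le_of_forall_exists_real_inner_le_zero hne hTcl
    (hKconv.innerParallelBody ht) he hTcl.frontier_subset fun k hk ↦ ?_
  have hkT := hTcl.frontier_subset hk
  obtain ⟨w, hw, hdist⟩ :=
    hK.exists_mem_frontier_infDist_compl_eq_dist (innerParallelBody_subset ht hkT)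
  have hwk : dist w k ≤ t := by
    rw [dist_comm, ← hdist]
    exact infDist_compl_le_of_mem_frontier_innerParallelBody hK.isClosed ht hk
  refine ⟨w, ⟨hw, mem_cthickening_of_dist_le w k t _ hkT hwk⟩, ?_⟩
  rw [forall_real_inner_le_zero_iff_forall_norm_le (hKconv.innerParallelBody ht) hkT]
  intro q hq
  rw [← dist_eq_norm, ← dist_eq_norm]
  exact hwk.trans (le_dist_of_mem_frontier hw hq)

lemma ofReal_rpow_mul_hausdorffMeasure_frontier_le [Nontrivial E] (hK : IsCompact K)
    (hKconv : Convex ℝ K) (hB : closedBall (0 : E) 1 ⊆ K) (he : 0 ≤ e) (ht₀ : 0 ≤ t)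
    (ht₁ : t < 1) :
    ENNReal.ofReal ((1 - t) ^ e) * μH[e] (frontier K) ≤
      μH[e] (frontier K ∩ cthickening t (innerParallelBody K t)) := by
  have h1t : 0 < 1 - t := by linarith
  have hint : (interior ((1 - t) • K)).Nonempty := by
    rw [interior_smul₀ h1t.ne']
    exact ⟨(1 - t) • 0, smul_mem_smul_set
      (interior_mono hB (ball_subset_interior_closedBall (mem_ball_self one_pos)))⟩
  have hsub := smul_subset_innerParallelBody hKconv hB ht₀ ht₁.le
  calc ENNReal.ofReal ((1 - t) ^ e) * μH[e] (frontier K)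
      = μH[e] (frontier ((1 - t) • K)) := (hausdorffMeasure_frontier_smul he h1t K).symm
    _ ≤ μH[e] (frontier (innerParallelBody K t)) :=
      hausdorffMeasure_frontier_le_of_subset (hKconv.smul _) (hK.smul (1 - t)).isClosed hint
        (hK.innerParallelBody ht₀) hsub he
    _ ≤ _ := hausdorffMeasure_frontier_innerParallelBody_le hK hKconv ht₀
      ((hint.mono interior_subset).mono hsub) he

end NearestPoint

theorem rolling_function_estimate_general {d : ℕ}
    (K : Set (EuclideanSpace ℝ (Fin d))) (hKc : IsCompact K) (hKconv : Convex ℝ K)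
    (hB : Metric.closedBall (0 : EuclideanSpace ℝ (Fin d)) 1 ⊆ K)
    (r : EuclideanSpace ℝ (Fin d) → ℝ)
    (hr : ∀ x, r x = sSup {s : ℝ | ∃ z ∈ K, s = ‖x - z‖ ∧
      Metric.closedBall z ‖x - z‖ ⊆ K})
    (t : ℝ) (ht : t ∈ Set.Icc (0 : ℝ) 1) :
    IsClosed {x | x ∈ frontier K ∧ t ≤ r x} ∧
    ENNReal.ofReal ((1 - t) ^ (d - 1)) *
        Measure.hausdorffMeasure ((d : ℝ) - 1) (frontier K) ≤
      Measure.hausdorffMeasure ((d : ℝ) - 1) {x | x ∈ frontier K ∧ t ≤ r x} := by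
  obtain rfl : r = fun x ↦ sSup (rollingRadii K x) := funext hr
  rw [setOf_le_sSup_rollingRadii_eq hKc ht.1]
  refine ⟨isClosed_frontier.inter isClosed_cthickening, ?_⟩
  obtain rfl | hd := eq_or_ne d 0
  · simp [(Set.nonempty_of_mem (hB (mem_closedBall_self zero_le_one))).eq_univ]
  have : Nontrivial (EuclideanSpace ℝ (Fin d)) :=
    Module.nontrivial_of_finrank_pos (by rw [finrank_euclideanSpace_fin]; omega)
  rcases ht.2.lt_or_eq with ht₁ | rfl
  · rw [← Real.rpow_natCast, Nat.cast_sub (Nat.one_le_iff_ne_zero.2 hd), Nat.cast_one]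
    exact ofReal_rpow_mul_hausdorffMeasure_frontier_le hKc hKconv hB
      (by simpa using Nat.one_le_iff_ne_zero.2 hd) ht.1 ht₁
  · obtain rfl | hd₂ : d = 1 ∨ 2 ≤ d := by omega
    · rw [inter_eq_left.2 (frontier_subset_cthickening_innerParallelBody_of_finrank_eq_one
        (finrank_euclideanSpace_fin) hKc.isClosed hKconv hB zero_le_one le_rfl)]
      simp
    · simp [zero_pow (by omega : d - 1 ≠ 0)]

/-- Rolling-function estimate of Schütt and Werner: if the unit ball rolls inside a
convex body `K` containing it, then for every `t ∈ [0,1]` the set of boundary points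
with rolling radius at least `t` is closed and has `(d-1)`-dimensional Hausdorff
measure at least `(1-t)^{d-1}` times that of `∂K`. -/
theorem rolling_function_estimate {d : ℕ}
    (K : Set (EuclideanSpace ℝ (Fin d))) (hKc : IsCompact K) (hKconv : Convex ℝ K)
    (hKint : (interior K).Nonempty)
    (hB : Metric.closedBall (0 : EuclideanSpace ℝ (Fin d)) 1 ⊆ K)
    (r : EuclideanSpace ℝ (Fin d) → ℝ)
    (hr : ∀ x, r x = sSup {s : ℝ | ∃ z ∈ K, s = ‖x - z‖ ∧
      Metric.closedBall z ‖x - z‖ ⊆ K})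
    (t : ℝ) (ht : t ∈ Set.Icc (0 : ℝ) 1) :
    IsClosed {x | x ∈ frontier K ∧ t ≤ r x} ∧
    ENNReal.ofReal ((1 - t) ^ (d - 1)) *
        Measure.hausdorffMeasure ((d : ℝ) - 1) (frontier K) ≤
      Measure.hausdorffMeasure ((d : ℝ) - 1) {x | x ∈ frontier K ∧ t ≤ r x} :=
  rolling_function_estimate_general K hKc hKconv hB r hr t ht
end
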